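/- arXiv:1705.05048 — 3 statements merged into one kernel-verified Lean document; each statement's English description precedes it below -/
import Mathlib

section
/- Let f(z) = 1/z + e^z, g(z) = 1/z − e^z/z and α(z) = 1/z, meromorphic on ℂ. Then f − α = e^z and g − α = −e^z/z have no zeros (so f and g share α CM in the sense of vanishing), but g(z) = (1 − e^z)/z has a removable singularity at z = 0 (with holomorphic extension taking the value −1 there) while f has a pole at z = 0; consequently f and g do not share α in the sense of value. -/
open Complex Topology
open scoped Classical

/-- The order of a meromorphic function at a point (junk value `0` if `f` is
not meromorphic at `z`).  Order `⊤` means `f ≡ 0` near `z`, a positive order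
is the multiplicity of a zero, a negative order is minus the multiplicity of
a pole. -/
noncomputable def morder (f : ℂ → ℂ) (z : ℂ) : WithTop ℤ :=
  if h : MeromorphicAt f z then meromorphicOrderAt f z else 0

/-- `f(z) = α(z)` in the sense of value: at a pole of `α` it means that `f`
also has a pole at `z`; elsewhere it means that the meromorphic function
`f - α` vanishes at `z`. -/
def ValueEqAt (f α : ℂ → ℂ) (z : ℂ) : Prop :=
  (morder α z < 0 ∧ morder f z < 0) ∨ (0 ≤ morder α z ∧ 0 < morder (f - α) z)

/-- `f` and `g` share the function `α` IM in the sense of value on `D`. -/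
def ShareIMValue (f g α : ℂ → ℂ) (D : Set ℂ) : Prop :=
  ∀ z ∈ D, (ValueEqAt f α z ↔ ValueEqAt g α z)

/-- `f` and `g` share the function `α` CM in the sense of value on `D`:
at points where `α` is finite the orders of the zeros of `f - α` and `g - α`
agree, and at poles of `α` the orders of the zeros of `1/f - 1/α` and
`1/g - 1/α` agree. -/
def ShareCMValue (f g α : ℂ → ℂ) (D : Set ℂ) : Prop :=
  ∀ z ∈ D,
    (0 ≤ morder α z → ∀ m : ℕ, 1 ≤ m →
      (morder (f - α) z = (m : ℤ) ↔ morder (g - α) z = (m : ℤ))) ∧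
    (morder α z < 0 → ∀ m : ℕ, 1 ≤ m →
      (morder (f⁻¹ - α⁻¹) z = (m : ℤ) ↔ morder (g⁻¹ - α⁻¹) z = (m : ℤ)))

/-- `f` and `g` share the function `α` IM in the sense of vanishing on `D`:
`f - α` and `g - α` have the same zeros (ignoring multiplicities). -/
def ShareIMVanishing (f g α : ℂ → ℂ) (D : Set ℂ) : Prop :=
  ∀ z ∈ D, (0 < morder (f - α) z ↔ 0 < morder (g - α) z)

/-- `f` and `g` share the function `α` CM in the sense of vanishing on `D`:
`f - α` and `g - α` have the same zeros with the same multiplicities. -/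
def ShareCMVanishing (f g α : ℂ → ℂ) (D : Set ℂ) : Prop :=
  ∀ z ∈ D, ∀ m : ℕ, 1 ≤ m →
    (morder (f - α) z = (m : ℤ) ↔ morder (g - α) z = (m : ℤ))

/-! Both `f - α = e^z` and `g - α = -e^z/z` are zero-free, so sharing `α` in the sense of
vanishing holds vacuously. At `0`, however, `α` and `f` have simple poles, whereas off `0`
`g = (1 - e^z)/z = -slope exp 0`, so `g` extends across `0` by `-dslope exp 0`, which is
analytic with value `-exp' 0 = -1`. Thus `f(0) = α(0)` in the sense of value, but not
`g(0) = α(0)`. -/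

lemma morder_eq_of_eventually_eq_zpow_mul {f h : ℂ → ℂ} {z : ℂ} {n : ℤ}
    (hh : AnalyticAt ℂ h z) (hhz : h z ≠ 0)
    (hf : ∀ᶠ w in 𝓝[≠] z, f w = (w - z) ^ n * h w) : morder f z = n := by
  have hmero : MeromorphicAt f z :=
    ((((MeromorphicAt.id z).sub (.const z z)).zpow n).mul hh.meromorphicAt).congr
      (Filter.EventuallyEq.symm hf)
  rw [morder, dif_pos hmero, meromorphicOrderAt_eq_int_iff hmero]
  exact ⟨h, hh, hhz, by simpa only [smul_eq_mul] using hf⟩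

lemma AnalyticAt.morder_eq_zero {f : ℂ → ℂ} {z : ℂ} (hf : AnalyticAt ℂ f z)
    (hfz : f z ≠ 0) :
    morder f z = 0 :=
  morder_eq_of_eventually_eq_zpow_mul hf hfz (.of_forall fun w => by simp)

lemma shareCMVanishing_of_forall_not_pos {f g α : ℂ → ℂ} {D : Set ℂ}
    (hf : ∀ z ∈ D, ¬ 0 < morder (f - α) z) (hg : ∀ z ∈ D, ¬ 0 < morder (g - α) z) :
    ShareCMVanishing f g α D := by
  intro z hz m hm
  have hm : (0 : WithTop ℤ) < (m : ℤ) := by exact_mod_cast hm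
  exact iff_of_false (fun h => hf z hz (h ▸ hm)) (fun h => hg z hz (h ▸ hm))

lemma valueEqAt_iff_of_morder_neg {f α : ℂ → ℂ} {z : ℂ} (hα : morder α z < 0) :
    ValueEqAt f α z ↔ morder f z < 0 := by
  simp [ValueEqAt, hα, not_le.mpr hα]

lemma not_shareIMValue_of_morder_neg_of_nonneg {f g α : ℂ → ℂ} {D : Set ℂ} {z : ℂ}
    (hz : z ∈ D) (hα : morder α z < 0) (hf : morder f z < 0) (hg : 0 ≤ morder g z) :
    ¬ ShareIMValue f g α D := fun h =>
  (not_lt.mpr hg) <| (valueEqAt_iff_of_morder_neg hα).mp <|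
    (h z hz).mp ((valueEqAt_iff_of_morder_neg hα).mpr hf)

lemma AnalyticAt.dslope {𝕜 E : Type*} [NontriviallyNormedField 𝕜] [NormedAddCommGroup E]
    [NormedSpace 𝕜 E] {f : 𝕜 → E} {a : 𝕜} (hf : AnalyticAt 𝕜 f a) :
    AnalyticAt 𝕜 (dslope f a) a :=
  let ⟨_, hp⟩ := hf
  ⟨_, hp.has_fpower_series_dslope_fslope⟩

lemma morder_inv_zero : morder (fun z : ℂ => z⁻¹) 0 = -1 :=
  morder_eq_of_eventually_eq_zpow_mul (h := 1) analyticAt_const one_ne_zero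
    (.of_forall fun z => by simp)

lemma morder_inv_add_of_analyticAt {h : ℂ → ℂ} (hh : AnalyticAt ℂ h 0) :
    morder (fun z => z⁻¹ + h z) 0 = -1 := by
  refine morder_eq_of_eventually_eq_zpow_mul (h := fun z => 1 + z * h z)
    (analyticAt_const.add (analyticAt_id.mul hh)) (by simp) ?_
  filter_upwards [self_mem_nhdsWithin] with z (hz : z ≠ 0)
  simp [field]

lemma morder_neg_exp_div_self_le_zero (z : ℂ) : morder (fun z => -(exp z / z)) z ≤ 0 := by
  rcases eq_or_ne z 0 with rfl | hz
  · rw [morder_eq_of_eventually_eq_zpow_mul (n := -1) analyticAt_cexp.neg (by simp)]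
    · decide
    filter_upwards with w
    simp [div_eq_inv_mul]
  · have hana : AnalyticAt ℂ (fun w => -(exp w / w)) z :=
      (analyticAt_cexp.div analyticAt_id hz).neg
    rw [hana.morder_eq_zero (neg_ne_zero.mpr (div_ne_zero (exp_ne_zero z) hz))]

lemma one_sub_exp_div_self_eq_neg_dslope {z : ℂ} (hz : z ≠ 0) :
    (1 - exp z) / z = -dslope exp 0 z := by
  rw [dslope_of_ne _ hz, slope_def_field, exp_zero, sub_zero, ← neg_div, neg_sub]

/-- Example 1: `f = 1/z + e^z` and `g = 1/z - e^z/z` share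
`α = 1/z` CM in the sense of vanishing (the differences `e^z` and `-e^z/z`
have no zeros), but `g` has a removable singularity at `0` with extension
value `-1` while `f` has a pole at `0`; hence `f` and `g` do not share `α`
in the sense of value. -/
theorem example_one (f g α : ℂ → ℂ)
    (hfdef : f = fun z => z⁻¹ + exp z)
    (hgdef : g = fun z => z⁻¹ - exp z / z)
    (hαdef : α = fun z => z⁻¹) :
    MeromorphicOn f Set.univ ∧ MeromorphicOn g Set.univ ∧
    MeromorphicOn α Set.univ ∧
    (∀ z, f z - α z = exp z) ∧
    (∀ z, g z - α z = -(exp z / z)) ∧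
    (∀ z ≠ (0 : ℂ), g z = (1 - exp z) / z) ∧
    (∀ z, ¬ 0 < morder (f - α) z) ∧
    (∀ z, ¬ 0 < morder (g - α) z) ∧
    ShareCMVanishing f g α Set.univ ∧
    (∃ G : ℂ → ℂ, AnalyticAt ℂ G 0 ∧ G 0 = -1 ∧
      ∀ᶠ z in 𝓝[≠] (0 : ℂ), g z = G z) ∧
    morder f 0 < 0 ∧
    ¬ ShareIMValue f g α Set.univ := by
  have hfα : f - α = exp := by ext z; simp [hfdef, hαdef]
  have hgα : g - α = fun z => -(exp z / z) := by ext z; simp [hgdef, hαdef]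
  have hg : ∀ z ≠ (0 : ℂ), g z = (1 - exp z) / z := fun z hz => by simp [hgdef, field]
  have hgG : ∀ᶠ z in 𝓝[≠] (0 : ℂ), g z = -dslope exp 0 z := by
    filter_upwards [self_mem_nhdsWithin] with z (hz : z ≠ 0)
    rw [hg z hz, one_sub_exp_div_self_eq_neg_dslope hz]
  have hG : AnalyticAt ℂ (-dslope exp 0) 0 := analyticAt_cexp.dslope.neg
  have hG0 : (-dslope exp 0) 0 = -1 := by simp [dslope_same]
  have hf0 : morder f 0 < 0 := by rw [hfdef, morder_inv_add_of_analyticAt analyticAt_cexp]; decide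
  have hα0 : morder α 0 < 0 := by rw [hαdef, morder_inv_zero]; decide
  have hg0 : morder g 0 = 0 :=
    morder_eq_of_eventually_eq_zpow_mul hG (by simp [hG0]) (by simpa using hgG)
  have hfα_pos : ∀ z, ¬ 0 < morder (f - α) z := fun z => by
    simp [hfα, analyticAt_cexp.morder_eq_zero (exp_ne_zero z)]
  have hgα_pos : ∀ z, ¬ 0 < morder (g - α) z := fun z => by
    simpa [hgα] using morder_neg_exp_div_self_le_zero z
  exact ⟨fun z _ => by rw [hfdef]; fun_prop, fun z _ => by rw [hgdef]; fun_prop,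
    fun z _ => by rw [hαdef]; fun_prop, congrFun hfα, congrFun hgα, hg, hfα_pos, hgα_pos,
    shareCMVanishing_of_forall_not_pos (fun z _ => hfα_pos z) (fun z _ => hgα_pos z),
    ⟨_, hG, hG0, hgG⟩, hf0,
    not_shareIMValue_of_morder_neg_of_nonneg (Set.mem_univ 0) hα0 hf0 hg0.ge⟩
end

section
/- Let f(z) = 1/sin z + e^{z²}, g(z) = (1 + e^{z²})/sin z and α(z) = 1/sin z, meromorphic on ℂ. Then f − α = e^{z²} and g − α = e^{z²}/sin z have no zeros (so f and g share α CM in the sense of vanishing), but f/α − 1 = e^{z²} sin z vanishes at every point of πℤ (infinitely many points) while g/α − 1 = e^{z²} has no zeros; consequently f/α and g/α do not share the value 1, not even IM, and the sharing fails at infinitely many points. -/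
open Complex Topology
open scoped Classical

/-!
Orders are read off punctured neighbourhoods, where `sin` has no zeros. There
`f - α = e^{z²}`, `g/α - 1 = e^{z²}` and `f/α - 1 = e^{z²} sin z` agree with entire functions,
whose order is positive exactly where they vanish. The order of `g - α = e^{z²}/sin z` cannot be
positive either: then `e^{z²} = (g - α) · sin z` would tend to `0`.
-/

section MeromorphicOrder

open Filter

variable {F G H : ℂ → ℂ} {a : ℂ}

lemma morder_congr_nhdsNE (h : F =ᶠ[𝓝[≠] a] G) : morder F a = morder G a := by
  by_cases hF : MeromorphicAt F a
  · rw [morder, morder, dif_pos hF, dif_pos (hF.congr h), meromorphicOrderAt_congr h]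
  · rw [morder, morder, dif_neg hF, dif_neg fun hG => hF (hG.congr h.symm)]

lemma tendsto_nhdsNE_zero_of_morder_pos (h : 0 < morder F a) :
    Tendsto F (𝓝[≠] a) (𝓝 0) := by
  unfold morder at h
  split_ifs at h
  · exact tendsto_zero_of_meromorphicOrderAt_pos h
  · exact absurd h (lt_irrefl 0)

lemma AnalyticAt.morder_pos_iff (hF : AnalyticAt ℂ F a) : 0 < morder F a ↔ F a = 0 := by
  have hlim : Tendsto F (𝓝[≠] a) (𝓝 (F a)) :=
    hF.continuousAt.tendsto.mono_left nhdsWithin_le_nhds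
  refine ⟨fun h => tendsto_nhds_unique hlim (tendsto_nhdsNE_zero_of_morder_pos h), fun h => ?_⟩
  rw [morder, dif_pos hF.meromorphicAt,
    ← tendsto_zero_iff_meromorphicOrderAt_pos hF.meromorphicAt]
  exact h ▸ hlim

lemma not_morder_div_pos (hH : ContinuousAt H a) (hHa : H a ≠ 0) (hG : ContinuousAt G a)
    (hG0 : ∀ᶠ z in 𝓝[≠] a, G z ≠ 0) : ¬ 0 < morder (H / G) a := by
  intro hpos
  have hprod : Tendsto (fun z => (H / G) z * G z) (𝓝[≠] a) (𝓝 (0 * G a)) :=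
    (tendsto_nhdsNE_zero_of_morder_pos hpos).mul (hG.tendsto.mono_left nhdsWithin_le_nhds)
  have hH' : Tendsto H (𝓝[≠] a) (𝓝 0) := by
    rw [zero_mul] at hprod
    refine hprod.congr' ?_
    filter_upwards [hG0] with z hz
    simp [hz]
  exact hHa (tendsto_nhds_unique (hH.tendsto.mono_left nhdsWithin_le_nhds) hH')

end MeromorphicOrder

lemma Differentiable.eventually_ne_zero_nhdsNE {F : ℂ → ℂ} (hF : Differentiable ℂ F)
    (hF0 : F ≠ 0) (a : ℂ) : ∀ᶠ z in 𝓝[≠] a, F z ≠ 0 := by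
  by_contra h
  rw [Filter.not_eventually] at h
  simp only [not_not] at h
  exact hF0 (AnalyticOnNhd.eq_of_frequently_eq (fun z _ => hF.analyticAt z)
    analyticOnNhd_const h)

lemma sin_eventually_ne_zero_nhdsNE (a : ℂ) : ∀ᶠ z in 𝓝[≠] a, Complex.sin z ≠ 0 :=
  Complex.differentiable_sin.eventually_ne_zero_nhdsNE
    (fun h => by simpa using congrFun h (Real.pi / 2)) a

lemma analyticAt_exp_sq (a : ℂ) : AnalyticAt ℂ (fun z => exp (z ^ 2)) a :=
  analyticAt_cexp.comp (analyticAt_id.pow 2)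

lemma not_morder_pos_of_eq_exp_sq {F : ℂ → ℂ}
    (hF : ∀ z, Complex.sin z ≠ 0 → F z = exp (z ^ 2)) (a : ℂ) : ¬ 0 < morder F a := by
  rw [morder_congr_nhdsNE ((sin_eventually_ne_zero_nhdsNE a).mono hF),
    (analyticAt_exp_sq a).morder_pos_iff]
  exact Complex.exp_ne_zero _

lemma morder_pos_of_eq_exp_sq_mul_sin {F : ℂ → ℂ}
    (hF : ∀ z, Complex.sin z ≠ 0 → F z = exp (z ^ 2) * Complex.sin z) (k : ℤ) :
    0 < morder F ((k : ℂ) * Real.pi) := by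
  have han : AnalyticAt ℂ (fun z => exp (z ^ 2) * Complex.sin z) ((k : ℂ) * Real.pi) :=
    (analyticAt_exp_sq _).mul (Complex.differentiable_sin.analyticAt _)
  rw [morder_congr_nhdsNE ((sin_eventually_ne_zero_nhdsNE _).mono hF), han.morder_pos_iff,
    Complex.sin_int_mul_pi, mul_zero]

lemma Set.infinite_of_forall_intCast_mul_pi_mem {s : Set ℂ}
    (h : ∀ k : ℤ, (k : ℂ) * Real.pi ∈ s) : s.Infinite := by
  refine Set.infinite_of_injective_forall_mem (fun k l hkl => ?_) h
  exact_mod_cast mul_right_cancel₀ (Complex.ofReal_ne_zero.mpr Real.pi_ne_zero) hkl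

lemma shareCMVanishing_of_forall_not_morder_pos {f g α : ℂ → ℂ} {D : Set ℂ}
    (hf : ∀ z, ¬ 0 < morder (f - α) z) (hg : ∀ z, ¬ 0 < morder (g - α) z) :
    ShareCMVanishing f g α D := by
  intro z _ m hm
  have hm' : (0 : WithTop ℤ) < ((m : ℤ) : WithTop ℤ) := by exact_mod_cast hm
  exact ⟨fun h => absurd (h ▸ hm') (hf z), fun h => absurd (h ▸ hm') (hg z)⟩

/-- Example 6: `f = 1/sin z + e^{z²}` and `g = (1 + e^{z²})/sin z`
share `α = 1/sin z` CM in the sense of vanishing, but `f/α - 1 = e^{z²} sin z`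
vanishes at every point of `πℤ` (infinitely many points) while
`g/α - 1 = e^{z²}` has no zeros; hence `f/α` and `g/α` do not share the value
`1`, not even IM. -/
theorem example_six (f g α : ℂ → ℂ)
    (hfdef : f = fun z => (Complex.sin z)⁻¹ + exp (z ^ 2))
    (hgdef : g = fun z => (1 + exp (z ^ 2)) / Complex.sin z)
    (hαdef : α = fun z => (Complex.sin z)⁻¹) :
    (∀ z : ℂ, Complex.sin z = 0 ↔ ∃ k : ℤ, z = (k : ℂ) * Real.pi) ∧
    (∀ z, f z - α z = exp (z ^ 2)) ∧
    (∀ z, g z - α z = exp (z ^ 2) / Complex.sin z) ∧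
    (∀ z, ¬ 0 < morder (f - α) z) ∧
    (∀ z, ¬ 0 < morder (g - α) z) ∧
    ShareCMVanishing f g α Set.univ ∧
    (∀ z, Complex.sin z ≠ 0 → f z / α z - 1 = exp (z ^ 2) * Complex.sin z) ∧
    (∀ z, Complex.sin z ≠ 0 → g z / α z - 1 = exp (z ^ 2)) ∧
    (∀ k : ℤ, 0 < morder (f / α - 1) ((k : ℂ) * Real.pi)) ∧
    (∀ z, ¬ 0 < morder (g / α - 1) z) ∧
    Set.Infinite {z : ℂ | 0 < morder (f / α - 1) z ∧ ¬ 0 < morder (g / α - 1) z} ∧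
    ¬ ShareIMVanishing (f / α) (g / α) 1 Set.univ := by
  have hfα : ∀ z, f z - α z = exp (z ^ 2) := fun z => by
    simp only [hfdef, hαdef]; ring
  have hgα : ∀ z, g z - α z = exp (z ^ 2) / Complex.sin z := fun z => by
    simp only [hgdef, hαdef]; ring
  have hfq : ∀ z, Complex.sin z ≠ 0 → f z / α z - 1 = exp (z ^ 2) * Complex.sin z :=
    fun z hz => by simp only [hfdef, hαdef]; field_simp; ring
  have hgq : ∀ z, Complex.sin z ≠ 0 → g z / α z - 1 = exp (z ^ 2) :=
    fun z hz => by simp only [hgdef, hαdef]; field_simp; ring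
  have hf_ne : ∀ z, ¬ 0 < morder (f - α) z := not_morder_pos_of_eq_exp_sq fun z _ => hfα z
  have hg_ne : ∀ z, ¬ 0 < morder (g - α) z := fun z => by
    rw [show g - α = (fun z => exp (z ^ 2)) / Complex.sin from funext hgα]
    exact not_morder_div_pos (analyticAt_exp_sq z).continuousAt (Complex.exp_ne_zero _)
      Complex.continuous_sin.continuousAt (sin_eventually_ne_zero_nhdsNE z)
  have hfq_pos : ∀ k : ℤ, 0 < morder (f / α - 1) ((k : ℂ) * Real.pi) :=
    morder_pos_of_eq_exp_sq_mul_sin hfq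
  have hgq_ne : ∀ z, ¬ 0 < morder (g / α - 1) z := not_morder_pos_of_eq_exp_sq hgq
  refine ⟨fun z => Complex.sin_eq_zero_iff, hfα, hgα, hf_ne, hg_ne,
    shareCMVanishing_of_forall_not_morder_pos hf_ne hg_ne, hfq, hgq, hfq_pos, hgq_ne,
    Set.infinite_of_forall_intCast_mul_pi_mem fun k => ⟨hfq_pos k, hgq_ne _⟩,
    fun h => hgq_ne 0 ((h 0 trivial).1 (by simpa using hfq_pos 0))⟩
end

section
/- Let m be a nonnegative integer and set f(z) = (sin z)^{m+1} + (sin z)^{m+1} e^{z²}, g(z) = (sin z)^{m+1} + (sin z)^{m+2} e^{z²} and α(z) = (sin z)^{m+1}, entire functions on ℂ. Then f − α = (sin z)^{m+1} e^{z²} has zeros exactly on πℤ, each of order m+1, and g − α = (sin z)^{m+2} e^{z²} has zeros exactly on πℤ, each of order m+2; in particular f and g share α with weight m in the sense of vanishing. But f/α − 1 = e^{z²} has no zeros while g/α − 1 = (sin z) e^{z²} vanishes at every point of πℤ, so f/α and g/α do not share the value 1, not even IM. -/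
open Complex Topology
open scoped Classical

/-- `f` and `g` share the function `α` with weight `m` in the sense of
vanishing on `D`: for each `k = 1, …, m` the `k`-fold zeros of `f - α`
coincide with the `k`-fold zeros of `g - α`, and the zeros of `f - α` of
multiplicity greater than `m` coincide in location with those of `g - α`. -/
def ShareWeightVanishing (f g α : ℂ → ℂ) (m : ℕ) (D : Set ℂ) : Prop :=
  ∀ z ∈ D,
    (∀ k : ℕ, 1 ≤ k → k ≤ m →
      (morder (f - α) z = (k : ℤ) ↔ morder (g - α) z = (k : ℤ))) ∧
    ((m : ℤ) < morder (f - α) z ↔ (m : ℤ) < morder (g - α) z)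

/-! Every order is read off from those of `sin`, which has a simple zero at each point of `πℤ`
(where `cos = ±1`) and no other zeros, and of the zero-free `exp (z²)`. The quotients
`f/α - 1` and `g/α - 1` are not literally `e^{z²}` and `sin z · e^{z²}`: on `πℤ`, where
`α = 0`, division by zero gives them the value `-1`. But they agree with these off the discrete
set `πℤ`, and the order at a point only sees a punctured neighbourhood of it. -/

lemma morder_eq_of_eventuallyEq {F G : ℂ → ℂ} {z : ℂ} (hG : MeromorphicAt G z)
    (hFG : F =ᶠ[𝓝[≠] z] G) : morder F z = meromorphicOrderAt G z := by
  rw [morder, dif_pos (hG.congr hFG.symm), meromorphicOrderAt_congr hFG]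

lemma shareWeightVanishing_of_orders_le_zero_or_gt {f g α : ℂ → ℂ} {m : ℕ} {D : Set ℂ}
    (h : ∀ z ∈ D, (morder (f - α) z ≤ 0 ∧ morder (g - α) z ≤ 0) ∨
      ((m : ℤ) < morder (f - α) z ∧ (m : ℤ) < morder (g - α) z)) :
    ShareWeightVanishing f g α m D := by
  intro z hz
  have key : ∀ k : ℕ, 1 ≤ k → k ≤ m →
      morder (f - α) z ≠ (k : ℤ) ∧ morder (g - α) z ≠ (k : ℤ) := by
    intro k hk₁ hkm
    have hk_pos : (0 : WithTop ℤ) < (k : ℤ) := by exact_mod_cast hk₁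
    have hk_le : ((k : ℤ) : WithTop ℤ) ≤ (m : ℤ) := by exact_mod_cast hkm
    rcases h z hz with ⟨hf, hg⟩ | ⟨hf, hg⟩
    · exact ⟨(hf.trans_lt hk_pos).ne, (hg.trans_lt hk_pos).ne⟩
    · exact ⟨(hk_le.trans_lt hf).ne', (hk_le.trans_lt hg).ne'⟩
  refine ⟨fun k hk₁ hkm => iff_of_false (key k hk₁ hkm).1 (key k hk₁ hkm).2, ?_⟩
  have hm : (0 : WithTop ℤ) ≤ (m : ℤ) := by exact_mod_cast m.cast_nonneg
  rcases h z hz with ⟨hf, hg⟩ | ⟨hf, hg⟩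
  · exact iff_of_false (hf.trans hm).not_gt (hg.trans hm).not_gt
  · exact iff_of_true hf hg

lemma add_pow_mul_div_pow_sub_one {K : Type*} [Field K] {s : K} (hs : s ≠ 0) (a : K)
    (n j : ℕ) : (s ^ n + s ^ (n + j) * a) / s ^ n - 1 = s ^ j * a := by
  field_simp
  ring

namespace Complex

lemma cos_ne_zero_of_sin_eq_zero {z : ℂ} (hz : sin z = 0) : cos z ≠ 0 := by
  intro hc
  simpa [hz, hc] using sin_sq_add_cos_sq z

lemma meromorphicOrderAt_sin (z : ℂ) :
    meromorphicOrderAt sin z = if sin z = 0 then 1 else 0 := by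
  have hsin : AnalyticAt ℂ sin z := analyticAt_sin
  rw [hsin.meromorphicOrderAt_eq]
  split_ifs with hz
  · have h := hsin.analyticOrderAt_sub_eq_one_of_deriv_ne_zero
      (by simpa using cos_ne_zero_of_sin_eq_zero hz)
    simp only [hz, sub_zero] at h
    simp [h]
  · simp [hsin.analyticOrderAt_eq_zero.mpr hz]

lemma eventually_sin_ne_zero (z : ℂ) : ∀ᶠ w in 𝓝[≠] z, sin w ≠ 0 := by
  refine (meromorphicOrderAt_ne_top_iff_eventually_ne_zero analyticAt_sin.meromorphicAt).mp ?_
  rw [meromorphicOrderAt_sin]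
  split_ifs <;> simp

lemma meromorphicOrderAt_sin_pow_mul_exp_sq (n : ℕ) (z : ℂ) :
    meromorphicOrderAt (fun w => sin w ^ n * exp (w ^ 2)) z =
      if sin z = 0 then ((n : ℤ) : WithTop ℤ) else 0 := by
  have hexp : AnalyticAt ℂ (fun w => exp (w ^ 2)) z := by fun_prop
  calc meromorphicOrderAt (fun w => sin w ^ n * exp (w ^ 2)) z
      = meromorphicOrderAt ((fun w => exp (w ^ 2)) * sin ^ n) z := by
        congr 1; ext w; simp [mul_comm]
    _ = n * meromorphicOrderAt sin z :=
        (meromorphicOrderAt_mul_of_ne_zero hexp (exp_ne_zero _)).trans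
          (meromorphicOrderAt_pow analyticAt_sin.meromorphicAt)
    _ = if sin z = 0 then ((n : ℤ) : WithTop ℤ) else 0 := by
        rw [meromorphicOrderAt_sin]; split_ifs <;> simp

lemma morder_of_eventuallyEq_sin_pow_mul_exp_sq {F : ℂ → ℂ} {n : ℕ} {z : ℂ}
    (hF : F =ᶠ[𝓝[≠] z] fun w => sin w ^ n * exp (w ^ 2)) :
    morder F z = if sin z = 0 then ((n : ℤ) : WithTop ℤ) else 0 := by
  rw [morder_eq_of_eventuallyEq (by fun_prop) hF, meromorphicOrderAt_sin_pow_mul_exp_sq]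

lemma morder_sin_pow_mul_exp_sq (n : ℕ) (z : ℂ) :
    morder (fun w => sin w ^ n * exp (w ^ 2)) z =
      if sin z = 0 then ((n : ℤ) : WithTop ℤ) else 0 :=
  morder_of_eventuallyEq_sin_pow_mul_exp_sq Filter.EventuallyEq.rfl

lemma morder_sin_pow_mul_exp_sq_int_mul_pi (n : ℕ) (k : ℤ) :
    morder (fun w => sin w ^ n * exp (w ^ 2)) (k * Real.pi) = (n : ℤ) := by
  rw [morder_sin_pow_mul_exp_sq, if_pos (sin_int_mul_pi k)]

lemma zero_lt_morder_sin_pow_mul_exp_sq_iff {n : ℕ} (hn : n ≠ 0) (z : ℂ) :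
    0 < morder (fun w => sin w ^ n * exp (w ^ 2)) z ↔ ∃ k : ℤ, z = k * Real.pi := by
  rw [morder_sin_pow_mul_exp_sq, ← sin_eq_zero_iff]
  split_ifs with hz <;> simp [hz]
  omega

end Complex

lemma shareWeightVanishing_of_sub_eq_sin_pow_mul_exp_sq {f g α : ℂ → ℂ} {m a b : ℕ}
    {D : Set ℂ} (ha : m < a) (hb : m < b) (hf : f - α = fun w => sin w ^ a * exp (w ^ 2))
    (hg : g - α = fun w => sin w ^ b * exp (w ^ 2)) :
    ShareWeightVanishing f g α m D := by
  refine shareWeightVanishing_of_orders_le_zero_or_gt fun z _ => ?_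
  rw [hf, hg, morder_sin_pow_mul_exp_sq, morder_sin_pow_mul_exp_sq]
  split_ifs
  · right; constructor <;> exact_mod_cast (by omega)
  · left; simp

/-- Example 10: for every nonnegative integer `m`, the entire
functions `f = (sin z)^{m+1}(1 + e^{z²})` and
`g = (sin z)^{m+1} + (sin z)^{m+2} e^{z²}` share `α = (sin z)^{m+1}` with
weight `m` in the sense of vanishing (the differences have zeros exactly on
`πℤ`, of orders `m+1` and `m+2` respectively), but `f/α - 1 = e^{z²}` has no
zeros while `g/α - 1 = (sin z)e^{z²}` vanishes on `πℤ`; hence `f/α` and `g/α`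
do not share the value `1`, not even IM. -/
theorem example_ten (m : ℕ) (f g α : ℂ → ℂ)
    (hfdef : f = fun z => (Complex.sin z) ^ (m + 1) +
      (Complex.sin z) ^ (m + 1) * exp (z ^ 2))
    (hgdef : g = fun z => (Complex.sin z) ^ (m + 1) +
      (Complex.sin z) ^ (m + 2) * exp (z ^ 2))
    (hαdef : α = fun z => (Complex.sin z) ^ (m + 1)) :
    (∀ z, f z - α z = (Complex.sin z) ^ (m + 1) * exp (z ^ 2)) ∧
    (∀ z, g z - α z = (Complex.sin z) ^ (m + 2) * exp (z ^ 2)) ∧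
    (∀ z, 0 < morder (f - α) z ↔ ∃ k : ℤ, z = (k : ℂ) * Real.pi) ∧
    (∀ k : ℤ, morder (f - α) ((k : ℂ) * Real.pi) = ((m : ℤ) + 1)) ∧
    (∀ z, 0 < morder (g - α) z ↔ ∃ k : ℤ, z = (k : ℂ) * Real.pi) ∧
    (∀ k : ℤ, morder (g - α) ((k : ℂ) * Real.pi) = ((m : ℤ) + 2)) ∧
    ShareWeightVanishing f g α m Set.univ ∧
    (∀ z, Complex.sin z ≠ 0 → f z / α z - 1 = exp (z ^ 2)) ∧
    (∀ z, Complex.sin z ≠ 0 → g z / α z - 1 = Complex.sin z * exp (z ^ 2)) ∧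
    (∀ z, ¬ 0 < morder (f / α - 1) z) ∧
    (∀ k : ℤ, 0 < morder (g / α - 1) ((k : ℂ) * Real.pi)) ∧
    ¬ ShareIMVanishing (f / α) (g / α) 1 Set.univ := by
  have hfα : f - α = fun z => sin z ^ (m + 1) * exp (z ^ 2) := by
    funext z; simp only [Pi.sub_apply, hfdef, hαdef]; ring
  have hgα : g - α = fun z => sin z ^ (m + 2) * exp (z ^ 2) := by
    funext z; simp only [Pi.sub_apply, hgdef, hαdef]; ring
  have hf_div : ∀ z, sin z ≠ 0 → f z / α z - 1 = exp (z ^ 2) := fun z hz => by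
    simpa [hfdef, hαdef] using add_pow_mul_div_pow_sub_one hz (exp (z ^ 2)) (m + 1) 0
  have hg_div : ∀ z, sin z ≠ 0 → g z / α z - 1 = sin z * exp (z ^ 2) := fun z hz => by
    simpa [hgdef, hαdef] using add_pow_mul_div_pow_sub_one hz (exp (z ^ 2)) (m + 1) 1
  have hf_div_ord z : morder (f / α - 1) z = 0 := by
    simpa using morder_of_eventuallyEq_sin_pow_mul_exp_sq (F := f / α - 1) (n := 0)
      ((eventually_sin_ne_zero z).mono fun w hw => by simpa using hf_div w hw)
  have hg_div_pos (k : ℤ) : 0 < morder (g / α - 1) (k * Real.pi) := by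
    rw [morder_of_eventuallyEq_sin_pow_mul_exp_sq (n := 1)
      ((eventually_sin_ne_zero _).mono fun w hw => by simpa using hg_div w hw)]
    simp [sin_int_mul_pi]
  refine ⟨fun z => by rw [← Pi.sub_apply, hfα], fun z => by rw [← Pi.sub_apply, hgα],
    fun z => by rw [hfα]; exact zero_lt_morder_sin_pow_mul_exp_sq_iff (by omega) z,
    fun k => by rw [hfα, morder_sin_pow_mul_exp_sq_int_mul_pi]; push_cast; rfl,
    fun z => by rw [hgα]; exact zero_lt_morder_sin_pow_mul_exp_sq_iff (by omega) z,
    fun k => by rw [hgα, morder_sin_pow_mul_exp_sq_int_mul_pi]; push_cast; rfl,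
    shareWeightVanishing_of_sub_eq_sin_pow_mul_exp_sq (by omega) (by omega) hfα hgα,
    hf_div, hg_div, fun z => by simp [hf_div_ord], hg_div_pos, fun hshare => ?_⟩
  exact absurd ((hshare 0 trivial).mpr (by simpa using hg_div_pos 0)) (by simp [hf_div_ord])
end
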